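/- If q satisfies the normalized central configuration equations q_i = Σ_{j≠i} m_j (q_j − q_i)/‖q_j − q_i‖^(α+2) for all i (with center of mass at the origin), then for every pair i < j the Albouy–Chenciner equation holds: 0 = Σ_{k=1}^n m_k [ (r_{ik}^{-(α+2)} + M^{-1})(r_{jk}² − r_{ik}² − r_{ij}²) + (r_{jk}^{-(α+2)} + M^{-1})(r_{ik}² − r_{jk}² − r_{ij}²) ], where r_{ab} = ‖q_a − q_b‖, M = Σ_k m_k, and terms with k = i or k = j are interpreted with the convention S_{kk} = 0. -/

import Mathlib

/-!
Adding `M⁻¹ (q_k - q_a)` to each term of the central configuration equation at `q_a` and using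
`∑ m_k q_k = 0` turns that equation into the balance `∑_k m_k S_{ak} (q_k - q_a) = 0`. Pairing the
balance at `a` with `q_a - q_b` and writing `2⟪q_k - q_a, q_a - q_b⟫ = r_{bk}² - r_{ak}² - r_{ab}²`
gives a scalar identity; the Albouy–Chenciner equation is the sum of these for `(a, b) = (i, j)`
and `(a, b) = (j, i)`.
-/

open Finset

section Balance

variable {ι E : Type*} [Fintype ι]

theorem sum_smul_sub_eq_neg_sum_smul [AddCommGroup E] [Module ℝ E] {m : ι → ℝ} {q : ι → E}
    (hcm : ∑ k, m k • q k = 0) (a : ι) :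
    ∑ k, m k • (q k - q a) = -((∑ k, m k) • q a) := by
  simp only [smul_sub, sum_sub_distrib, hcm, sum_smul, zero_sub]

theorem sum_erase_smul_sub_eq_zero_of_central_configuration [DecidableEq ι]
    [NormedAddCommGroup E] [NormedSpace ℝ E] {α M : ℝ} {m : ι → ℝ} {q : ι → E}
    (hM : M = ∑ k, m k) (hM0 : M ≠ 0) (hcm : ∑ k, m k • q k = 0)
    (hcc : ∀ i, q i = ∑ j ∈ univ.erase i, (m j / ‖q j - q i‖ ^ (α + 2)) • (q j - q i))
    (a : ι) :
    ∑ k ∈ univ.erase a, (m k * (‖q a - q k‖ ^ (-(α + 2)) + M⁻¹)) • (q k - q a) = 0 := by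
  have hmean : ∑ k ∈ univ.erase a, (M⁻¹ * m k) • (q k - q a) = -q a := by
    rw [sum_erase univ (f := fun k => (M⁻¹ * m k) • (q k - q a)) (a := a) (by simp)]
    simp only [mul_smul, ← smul_sum]
    rw [sum_smul_sub_eq_neg_sum_smul hcm, ← hM, smul_neg, smul_smul, inv_mul_cancel₀ hM0,
      one_smul]
  calc ∑ k ∈ univ.erase a, (m k * (‖q a - q k‖ ^ (-(α + 2)) + M⁻¹)) • (q k - q a)
      = ∑ k ∈ univ.erase a, ((m k / ‖q k - q a‖ ^ (α + 2)) • (q k - q a)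
          + (M⁻¹ * m k) • (q k - q a)) := by
        refine sum_congr rfl fun k _ => ?_
        rw [norm_sub_rev, Real.rpow_neg (norm_nonneg _), ← add_smul, div_eq_mul_inv]
        ring_nf
    _ = 0 := by rw [sum_add_distrib, ← hcc a, hmean, add_neg_cancel]

end Balance

section Polarization

variable {ι E : Type*} [Fintype ι] [NormedAddCommGroup E] [InnerProductSpace ℝ E]

theorem two_mul_inner_sub_sub_eq (x y z : E) :
    2 * inner ℝ (z - x) (x - y) = ‖y - z‖ ^ 2 - ‖x - z‖ ^ 2 - ‖x - y‖ ^ 2 := by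
  have h := norm_add_sq_real (z - x) (x - y)
  rw [sub_add_sub_cancel] at h
  rw [norm_sub_rev y z, norm_sub_rev x z]
  linarith

theorem sum_mul_norm_sq_eq_zero_of_sum_smul_sub_eq_zero {w : ι → ℝ} {q : ι → E} {x : E}
    (hw : ∑ k, w k • (q k - x) = 0) (y : E) :
    ∑ k, w k * (‖y - q k‖ ^ 2 - ‖x - q k‖ ^ 2 - ‖x - y‖ ^ 2) = 0 := by
  have hinner : ∑ k, w k * inner ℝ (q k - x) (x - y) = 0 := by
    simpa only [sum_inner, real_inner_smul_left, inner_zero_left] using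
      congrArg (fun v : E => inner ℝ v (x - y)) hw
  simp only [← two_mul_inner_sub_sub_eq, mul_left_comm _ (2 : ℝ), ← mul_sum, hinner, mul_zero]

end Polarization

theorem albouy_chenciner_eq_general (n : ℕ) (α : ℝ)
    (m : Fin n → ℝ) (M : ℝ) (hM : M = ∑ i, m i) (hM0 : M ≠ 0)
    (q : Fin n → EuclideanSpace ℝ (Fin 2))
    (hcm : ∑ i, m i • q i = 0)
    (hcc : ∀ i, q i = ∑ j ∈ univ.erase i, (m j / ‖q j - q i‖ ^ (α + 2)) • (q j - q i))
    (r : Fin n → Fin n → ℝ) (hr : ∀ a b, r a b = ‖q a - q b‖)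
    (S : Fin n → Fin n → ℝ)
    (hS : ∀ a b, S a b = if b = a then 0 else r a b ^ (-(α + 2)) + M⁻¹) :
    ∀ i j : Fin n, i < j →
      0 = ∑ k, m k * (S i k * (r j k ^ 2 - r i k ^ 2 - r i j ^ 2)
          + S j k * (r i k ^ 2 - r j k ^ 2 - r i j ^ 2)) := by
  intro i j _
  have hbalance : ∀ a, ∑ k, (m k * S a k) • (q k - q a) = 0 := fun a => by
    rw [← sum_erase univ (f := fun k => (m k * S a k) • (q k - q a)) (a := a) (by simp),
      ← sum_erase_smul_sub_eq_zero_of_central_configuration hM hM0 hcm hcc a]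
    refine sum_congr rfl fun k hk => ?_
    rw [hS, if_neg (ne_of_mem_erase hk), hr]
  have hi := sum_mul_norm_sq_eq_zero_of_sum_smul_sub_eq_zero (hbalance i) (q j)
  have hj := sum_mul_norm_sq_eq_zero_of_sum_smul_sub_eq_zero (hbalance j) (q i)
  rw [norm_sub_rev (q j) (q i)] at hj
  simp only [hr, mul_add, ← mul_assoc, sum_add_distrib, hi, hj, add_zero]

theorem albouy_chenciner_eq (n : ℕ) (hn : 3 ≤ n) (α : ℝ) (hα : 0 ≤ α)
    (m : Fin n → ℝ) (hm : ∀ i, m i ≠ 0) (M : ℝ) (hM : M = ∑ i, m i) (hM0 : M ≠ 0)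
    (q : Fin n → EuclideanSpace ℝ (Fin 2)) (hq : ∀ i j, i ≠ j → q i ≠ q j)
    (hcm : ∑ i, m i • q i = 0)
    (hcc : ∀ i, q i = ∑ j ∈ univ.erase i, (m j / ‖q j - q i‖ ^ (α + 2)) • (q j - q i))
    (r : Fin n → Fin n → ℝ) (hr : ∀ a b, r a b = ‖q a - q b‖)
    (S : Fin n → Fin n → ℝ)
    (hS : ∀ a b, S a b = if b = a then 0 else r a b ^ (-(α + 2)) + M⁻¹) :
    ∀ i j : Fin n, i < j →
      0 = ∑ k, m k * (S i k * (r j k ^ 2 - r i k ^ 2 - r i j ^ 2)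
          + S j k * (r i k ^ 2 - r j k ^ 2 - r i j ^ 2)) :=
  albouy_chenciner_eq_general n α m M hM hM0 q hcm hcc r hr S hS
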